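/- Let L be a regular Lagrangian on a Lie algebroid prolongation T^E(E × ℝ) with contact section η_L and energy E_L = ρ^π(Δ)L − L. Then the unique section Γ_L satisfying i_{Γ_L} η_L = −E_L and i_{Γ_L} dη_L = dE_L + ρ^π(R_L)(E_L) η_L is a SODE, i.e., S(Γ_L) = Δ. -/

import Mathlib

/-!  The contact Lagrangian formalism on a Lie algebroid, in local coordinates.
The base is `Q = Fin n → ℝ`, the bundle `E` is trivialized by a basis `{e_α}` with
structure functions `ρⁱ_α = ρf q α i`, `C^γ_{αβ} = Cf q γ α β`.  Points of `E × ℝ` are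
`x = (qⁱ, y^α, s) : M := (Fin n → ℝ) × (Fin m → ℝ) × ℝ`, and a section of the
prolongation `T^E(E × ℝ)` is written in the basis `{X_α, V_α, V_s}` as a map
`M → F := (Fin m → ℝ) × (Fin m → ℝ) × ℝ`. -/

open scoped BigOperators

variable (n m : ℕ)

/-- `∂L/∂y^α`. -/
noncomputable def Ly (L : (Fin n → ℝ) × (Fin m → ℝ) × ℝ → ℝ) (α : Fin m)
    (x : (Fin n → ℝ) × (Fin m → ℝ) × ℝ) : ℝ :=
  fderiv ℝ L x (0, Pi.single α 1, 0)

/-- The contact 1-section `η_L = V^s − (∂L/∂y^α) X^α` of `(T^E(E × ℝ))^*`. -/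
noncomputable def etaL (L : (Fin n → ℝ) × (Fin m → ℝ) × ℝ → ℝ)
    (x : (Fin n → ℝ) × (Fin m → ℝ) × ℝ) (Z : (Fin m → ℝ) × (Fin m → ℝ) × ℝ) : ℝ :=
  Z.2.2 - ∑ α, Ly n m L α x * Z.1 α

/-- The local expression of `dη_L` (eq. (local omega co) of the paper):
`dη_L = (ρⁱ_β ∂²L/∂qⁱ∂y^α + ½ C^γ_{αβ} ∂L/∂y^γ) X^α ∧ X^β
        + (∂²L/∂y^β∂y^α) X^α ∧ V^β + (∂²L/∂s∂y^α) X^α ∧ V^s`. -/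
noncomputable def dEtaL (ρf : (Fin n → ℝ) → Fin m → Fin n → ℝ)
    (Cf : (Fin n → ℝ) → Fin m → Fin m → Fin m → ℝ)
    (L : (Fin n → ℝ) × (Fin m → ℝ) × ℝ → ℝ)
    (x : (Fin n → ℝ) × (Fin m → ℝ) × ℝ)
    (Z W : (Fin m → ℝ) × (Fin m → ℝ) × ℝ) : ℝ :=
  (∑ α, ∑ β,
    ((∑ i, ρf x.1 β i *
        fderiv ℝ (fun z => fderiv ℝ L z (0, Pi.single α 1, 0)) x (Pi.single i 1, 0, 0))
      + (1 / 2) * ∑ γ, Cf x.1 γ α β * Ly n m L γ x) *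
      (Z.1 α * W.1 β - W.1 α * Z.1 β))
  + (∑ α, ∑ β,
      fderiv ℝ (fun z => fderiv ℝ L z (0, Pi.single α 1, 0)) x (0, Pi.single β 1, 0) *
        (Z.1 α * W.2.1 β - W.1 α * Z.2.1 β))
  + ∑ α,
      fderiv ℝ (fun z => fderiv ℝ L z (0, Pi.single α 1, 0)) x (0, 0, 1) *
        (Z.1 α * W.2.2 - W.1 α * Z.2.2)

/-- The vector field `ρ^π(Z)` on `E × ℝ` associated with a prolongation element `Z`. -/
def vecOf (ρf : (Fin n → ℝ) → Fin m → Fin n → ℝ)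
    (x : (Fin n → ℝ) × (Fin m → ℝ) × ℝ) (Z : (Fin m → ℝ) × (Fin m → ℝ) × ℝ) :
    (Fin n → ℝ) × (Fin m → ℝ) × ℝ :=
  (fun i => ∑ α, ρf x.1 α i * Z.1 α, Z.2.1, Z.2.2)

/-- The energy `E_L = ρ^π(Δ)L − L = y^α ∂L/∂y^α − L`. -/
noncomputable def energyL (L : (Fin n → ℝ) × (Fin m → ℝ) × ℝ → ℝ)
    (x : (Fin n → ℝ) × (Fin m → ℝ) × ℝ) : ℝ :=
  (∑ α, x.2.1 α * Ly n m L α x) - L x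

/-- The vertical endomorphism `S = V_α ⊗ X^α` of the prolongation. -/
def vertS (Z : (Fin m → ℝ) × (Fin m → ℝ) × ℝ) : (Fin m → ℝ) × (Fin m → ℝ) × ℝ :=
  (0, Z.1, 0)

/-- The Liouville section `Δ = y^α V_α`. -/
def liouville (x : (Fin n → ℝ) × (Fin m → ℝ) × ℝ) :
    (Fin m → ℝ) × (Fin m → ℝ) × ℝ :=
  (0, x.2.1, 0)

lemma energy_fderiv_vert (L : (Fin n → ℝ) × (Fin m → ℝ) × ℝ → ℝ)
    (hL : ContDiff ℝ (⊤ : ℕ∞) L) (x : (Fin n → ℝ) × (Fin m → ℝ) × ℝ) (β : Fin m) :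
    fderiv ℝ (energyL n m L) x ((0 : Fin n → ℝ), Pi.single β 1, (0 : ℝ)) =
    ∑ α, x.2.1 α *
      fderiv ℝ (fun z => fderiv ℝ L z (0, Pi.single α 1, 0)) x (0, Pi.single β 1, 0) := by
  classical
  have hdf : Differentiable ℝ (fderiv ℝ L) :=
    (hL.fderiv_right (m := 1) (by exact WithTop.coe_le_coe.2 le_top)).differentiable one_ne_zero
  have hg : ∀ α : Fin m, Differentiable ℝ
      (fun z : (Fin n → ℝ) × (Fin m → ℝ) × ℝ =>
        fderiv ℝ L z ((0 : Fin n → ℝ), Pi.single α 1, (0:ℝ))) :=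
    fun α => hdf.clm_apply (differentiable_const _)
  -- the linear map `v ↦ v.2.1 α`
  set Eα : Fin m → (((Fin n → ℝ) × (Fin m → ℝ) × ℝ) →L[ℝ] ℝ) := fun α =>
    (ContinuousLinearMap.proj α).comp
      ((ContinuousLinearMap.fst ℝ (Fin m → ℝ) ℝ).comp
        (ContinuousLinearMap.snd ℝ (Fin n → ℝ) ((Fin m → ℝ) × ℝ))) with hEα
  have hD : HasFDerivAt (energyL n m L)
      ((∑ α, (x.2.1 α • fderiv ℝ (fun z : (Fin n → ℝ) × (Fin m → ℝ) × ℝ =>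
            fderiv ℝ L z ((0:Fin n → ℝ), Pi.single α 1, (0:ℝ))) x
          + (fderiv ℝ L x (0, Pi.single α 1, 0)) • Eα α)) - fderiv ℝ L x) x := by
    have h1 : ∀ α : Fin m, HasFDerivAt
        (fun z : (Fin n → ℝ) × (Fin m → ℝ) × ℝ =>
          z.2.1 α * fderiv ℝ L z ((0:Fin n → ℝ), Pi.single α 1, (0:ℝ)))
        (x.2.1 α • fderiv ℝ (fun z : (Fin n → ℝ) × (Fin m → ℝ) × ℝ =>
            fderiv ℝ L z ((0:Fin n → ℝ), Pi.single α 1, (0:ℝ))) x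
          + (fderiv ℝ L x (0, Pi.single α 1, 0)) • Eα α) x := by
      intro α
      exact ((Eα α).hasFDerivAt (x := x)).mul ((hg α x).hasFDerivAt)
    have hsum := HasFDerivAt.sum (fun α (_ : α ∈ Finset.univ) => h1 α)
    have := hsum.sub ((hL.differentiable (by simp) x).hasFDerivAt)
    refine this.congr_of_eventuallyEq (Filter.Eventually.of_forall fun z => ?_)
    simp only [energyL, Ly, Pi.sub_apply, Finset.sum_apply]
  rw [hD.fderiv]
  simp only [ContinuousLinearMap.coe_sub', Pi.sub_apply, ContinuousLinearMap.coe_sum',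
    Finset.sum_apply, ContinuousLinearMap.add_apply, ContinuousLinearMap.coe_smul',
    Pi.smul_apply, smul_eq_mul, hEα, ContinuousLinearMap.coe_comp', Function.comp_apply,
    ContinuousLinearMap.coe_snd', ContinuousLinearMap.coe_fst', ContinuousLinearMap.proj_apply]
  rw [Finset.sum_add_distrib]
  have : ∑ α, fderiv ℝ L x ((0:Fin n → ℝ), Pi.single α 1, (0:ℝ)) * (Pi.single β 1 : Fin m → ℝ) α
      = fderiv ℝ L x ((0:Fin n → ℝ), Pi.single β 1, (0:ℝ)) := by
    rw [Finset.sum_eq_single β] <;> simp +contextual [Pi.single_apply]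
  rw [this]; ring


/-- for a regular Lagrangian `L` on a Lie algebroid, the unique section
`Γ_L` of the prolongation `T^E(E × ℝ)` satisfying `i_{Γ_L} η_L = −E_L` and
`i_{Γ_L} dη_L = dE_L + ρ^π(R_L)(E_L) η_L` is a SODE, i.e. `S(Γ_L) = Δ`. -/
theorem lagrangian_section_is_sode
    (ρf : (Fin n → ℝ) → Fin m → Fin n → ℝ)
    (Cf : (Fin n → ℝ) → Fin m → Fin m → Fin m → ℝ)
    (L : (Fin n → ℝ) × (Fin m → ℝ) × ℝ → ℝ) (hL : ContDiff ℝ (⊤ : ℕ∞) L)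
    (hreg : ∀ x, (Matrix.of fun α β =>
      fderiv ℝ (fun z => fderiv ℝ L z (0, Pi.single β 1, 0)) x
        (0, Pi.single α 1, 0) : Matrix (Fin m) (Fin m) ℝ).det ≠ 0)
    (RL : (Fin n → ℝ) × (Fin m → ℝ) × ℝ → (Fin m → ℝ) × (Fin m → ℝ) × ℝ)
    (hRL₁ : ∀ x, etaL n m L x (RL x) = 1)
    (hRL₂ : ∀ x W, dEtaL n m ρf Cf L x (RL x) W = 0)
    (Γ : (Fin n → ℝ) × (Fin m → ℝ) × ℝ → (Fin m → ℝ) × (Fin m → ℝ) × ℝ)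
    (hΓ₁ : ∀ x, etaL n m L x (Γ x) = -energyL n m L x)
    (hΓ₂ : ∀ x W, dEtaL n m ρf Cf L x (Γ x) W =
      fderiv ℝ (energyL n m L) x (vecOf n m ρf x W)
      + fderiv ℝ (energyL n m L) x (vecOf n m ρf x (RL x)) * etaL n m L x W) :
    ∀ x, vertS m (Γ x) = liouville n m x := by
  classical
  intro x
  have key : ∀ β : Fin m,
      ∑ α, fderiv ℝ (fun z => fderiv ℝ L z (0, Pi.single α 1, 0)) x (0, Pi.single β 1, 0)
        * (Γ x).1 α
      = ∑ α, fderiv ℝ (fun z => fderiv ℝ L z (0, Pi.single α 1, 0)) x (0, Pi.single β 1, 0)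
        * x.2.1 α := by
    intro β
    have h := hΓ₂ x ((0 : Fin m → ℝ), Pi.single β 1, (0 : ℝ))
    have hvec : vecOf n m ρf x ((0 : Fin m → ℝ), Pi.single β 1, (0 : ℝ))
        = ((0 : Fin n → ℝ), Pi.single β 1, (0 : ℝ)) := by
      simp only [vecOf]
      refine Prod.ext ?_ rfl
      funext i
      simp
    have heta : etaL n m L x ((0 : Fin m → ℝ), Pi.single β 1, (0 : ℝ)) = 0 := by
      simp [etaL]
    have hde : dEtaL n m ρf Cf L x (Γ x) ((0 : Fin m → ℝ), Pi.single β 1, (0 : ℝ))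
        = ∑ α, fderiv ℝ (fun z => fderiv ℝ L z (0, Pi.single α 1, 0)) x (0, Pi.single β 1, 0)
          * (Γ x).1 α := by
      simp only [dEtaL, Pi.zero_apply, mul_zero, zero_mul, sub_zero, zero_sub, mul_neg,
        Finset.sum_const_zero, add_zero, zero_add, neg_zero, Finset.sum_neg_distrib]
      refine Finset.sum_congr rfl fun α _ => ?_
      rw [Finset.sum_eq_single β]
      · simp
      · intro b _ hb
        simp [Pi.single_apply, hb]
      · simp
    rw [hde, hvec, heta, mul_zero, add_zero, energy_fderiv_vert n m L hL x β] at h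
    rw [h]
    refine Finset.sum_congr rfl fun α _ => ?_
    ring
  have hmv : (Matrix.of fun α β =>
      fderiv ℝ (fun z => fderiv ℝ L z (0, Pi.single β 1, 0)) x
        (0, Pi.single α 1, 0) : Matrix (Fin m) (Fin m) ℝ).mulVec (Γ x).1
      = (Matrix.of fun α β =>
      fderiv ℝ (fun z => fderiv ℝ L z (0, Pi.single β 1, 0)) x
        (0, Pi.single α 1, 0) : Matrix (Fin m) (Fin m) ℝ).mulVec x.2.1 := by
    funext β
    simpa [Matrix.mulVec, dotProduct] using key β
  have hinj : Function.Injective (Matrix.of fun α β =>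
      fderiv ℝ (fun z => fderiv ℝ L z (0, Pi.single β 1, 0)) x
        (0, Pi.single α 1, 0) : Matrix (Fin m) (Fin m) ℝ).mulVec :=
    Matrix.mulVec_injective_iff_isUnit.2
      ((Matrix.isUnit_iff_isUnit_det _).2 (isUnit_iff_ne_zero.2 (hreg x)))
  have h1 : (Γ x).1 = x.2.1 := hinj hmv
  simp [vertS, liouville, h1]
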